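/- The function F₂ is strictly decreasing on [0,∞) (i.e. F₂(t) < F₂(s) whenever 0 ≤ s < t) and concave on [0,∞), with F₂(0) = 1. -/

import Mathlib

open Real

noncomputable section

/-- The function `F₂(y) = (1/√2)·(2 − √(1+y²))·√(1 + √(1+y²))`. -/
def F2 (y : ℝ) : ℝ :=
  (1 / Real.sqrt 2) * (2 - Real.sqrt (1 + y ^ 2)) * Real.sqrt (1 + Real.sqrt (1 + y ^ 2))

/-- The derivative of `F2`. -/
def F2' (y : ℝ) : ℝ :=
  -(3 / (2 * Real.sqrt 2)) * (y / Real.sqrt (1 + Real.sqrt (1 + y ^ 2)))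

lemma F2_hasDerivAt (y : ℝ) : HasDerivAt F2 (F2' y) y := by
  have hu2 : (0:ℝ) < 1 + y ^ 2 := by positivity
  have hu : 0 < Real.sqrt (1 + y ^ 2) := Real.sqrt_pos.mpr hu2
  have husq : Real.sqrt (1 + y ^ 2) ^ 2 = 1 + y ^ 2 := Real.sq_sqrt hu2.le
  have h1u : (0:ℝ) < 1 + Real.sqrt (1 + y ^ 2) := by linarith
  have hs : 0 < Real.sqrt (1 + Real.sqrt (1 + y ^ 2)) := Real.sqrt_pos.mpr h1u
  have hssq : Real.sqrt (1 + Real.sqrt (1 + y ^ 2)) ^ 2 = 1 + Real.sqrt (1 + y ^ 2) :=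
    Real.sq_sqrt h1u.le
  have h2 : (0:ℝ) < Real.sqrt 2 := Real.sqrt_pos.mpr (by norm_num)
  have h2sq : Real.sqrt 2 ^ 2 = 2 := Real.sq_sqrt (by norm_num)
  have d1 : HasDerivAt (fun y : ℝ => 1 + y ^ 2) (2 * y) y := by
    simpa using (hasDerivAt_pow 2 y).const_add (1:ℝ)
  have d2 : HasDerivAt (fun y : ℝ => Real.sqrt (1 + y ^ 2))
      (1 / (2 * Real.sqrt (1 + y ^ 2)) * (2 * y)) y :=
    (Real.hasDerivAt_sqrt hu2.ne').comp y d1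
  have d3 : HasDerivAt (fun y : ℝ => Real.sqrt (1 + Real.sqrt (1 + y ^ 2)))
      (1 / (2 * Real.sqrt (1 + Real.sqrt (1 + y ^ 2))) *
        (1 / (2 * Real.sqrt (1 + y ^ 2)) * (2 * y))) y :=
    (Real.hasDerivAt_sqrt h1u.ne').comp y (d2.const_add 1)
  have dA : HasDerivAt (fun y : ℝ => (1 / Real.sqrt 2) * (2 - Real.sqrt (1 + y ^ 2)))
      ((1 / Real.sqrt 2) * (0 - 1 / (2 * Real.sqrt (1 + y ^ 2)) * (2 * y))) y :=
    (((hasDerivAt_const y (2:ℝ)).sub d2)).const_mul _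
  have d4 := dA.mul d3
  refine d4.congr_deriv ?_
  symm
  unfold F2'
  field_simp
  linear_combination (2 * y) * hssq

lemma F2'_anti : AntitoneOn F2' (Set.Ici (0:ℝ)) := by
  intro a ha b hb hab
  simp only [Set.mem_Ici] at ha hb
  have key : ∀ y : ℝ, 0 ≤ y →
      (y / Real.sqrt (1 + Real.sqrt (1 + y ^ 2))) ^ 2 = Real.sqrt (1 + y ^ 2) - 1 := by
    intro y hy
    have hu2 : (0:ℝ) < 1 + y ^ 2 := by positivity
    have husq : Real.sqrt (1 + y ^ 2) ^ 2 = 1 + y ^ 2 := Real.sq_sqrt hu2.le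
    have h1u : (0:ℝ) < 1 + Real.sqrt (1 + y ^ 2) := by
      have := Real.sqrt_pos.mpr hu2; linarith
    have hssq : Real.sqrt (1 + Real.sqrt (1 + y ^ 2)) ^ 2 = 1 + Real.sqrt (1 + y ^ 2) :=
      Real.sq_sqrt h1u.le
    rw [div_pow, hssq]
    rw [div_eq_iff h1u.ne']
    nlinarith [husq]
  have h1 : a / Real.sqrt (1 + Real.sqrt (1 + a ^ 2)) ≤
      b / Real.sqrt (1 + Real.sqrt (1 + b ^ 2)) := by
    have hna : 0 ≤ a / Real.sqrt (1 + Real.sqrt (1 + a ^ 2)) := by positivity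
    have hnb : 0 ≤ b / Real.sqrt (1 + Real.sqrt (1 + b ^ 2)) := by positivity
    have hsq : (a / Real.sqrt (1 + Real.sqrt (1 + a ^ 2))) ^ 2 ≤
        (b / Real.sqrt (1 + Real.sqrt (1 + b ^ 2))) ^ 2 := by
      rw [key a ha, key b (ha.trans hab)]
      have : Real.sqrt (1 + a ^ 2) ≤ Real.sqrt (1 + b ^ 2) :=
        Real.sqrt_le_sqrt (by nlinarith)
      linarith
    calc a / Real.sqrt (1 + Real.sqrt (1 + a ^ 2))
        = Real.sqrt ((a / Real.sqrt (1 + Real.sqrt (1 + a ^ 2))) ^ 2) :=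
          (Real.sqrt_sq hna).symm
      _ ≤ Real.sqrt ((b / Real.sqrt (1 + Real.sqrt (1 + b ^ 2))) ^ 2) :=
          Real.sqrt_le_sqrt hsq
      _ = b / Real.sqrt (1 + Real.sqrt (1 + b ^ 2)) := Real.sqrt_sq hnb
  unfold F2'
  have hc : 0 < 3 / (2 * Real.sqrt 2) := by positivity
  nlinarith [h1]

theorem F2_strictAnti_concave :
    StrictAntiOn F2 (Set.Ici 0) ∧ ConcaveOn ℝ (Set.Ici 0) F2 ∧ F2 0 = 1 := by
  have hderiv : ∀ y : ℝ, deriv F2 y = F2' y := fun y => (F2_hasDerivAt y).deriv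
  have hdiff : Differentiable ℝ F2 := fun y => (F2_hasDerivAt y).differentiableAt
  have hcont : ContinuousOn F2 (Set.Ici 0) := hdiff.continuous.continuousOn
  have hint : interior (Set.Ici (0:ℝ)) = Set.Ioi 0 := interior_Ici
  refine ⟨?_, ?_, ?_⟩
  · apply strictAntiOn_of_deriv_neg (convex_Ici 0) hcont
    intro x hx
    rw [hint, Set.mem_Ioi] at hx
    rw [hderiv]
    unfold F2'
    have hs : 0 < Real.sqrt (1 + Real.sqrt (1 + x ^ 2)) := by
      apply Real.sqrt_pos.mpr
      have := Real.sqrt_nonneg (1 + x ^ 2); linarith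
    have h2 : 0 < Real.sqrt 2 := Real.sqrt_pos.mpr (by norm_num)
    have : 0 < 3 / (2 * Real.sqrt 2) * (x / Real.sqrt (1 + Real.sqrt (1 + x ^ 2))) := by
      positivity
    linarith
  · apply AntitoneOn.concaveOn_of_deriv (convex_Ici 0) hcont
    · exact hdiff.differentiableOn
    · intro a ha b hb hab
      rw [hint] at ha hb
      rw [hderiv, hderiv]
      exact F2'_anti (Set.Ioi_subset_Ici_self ha) (Set.Ioi_subset_Ici_self hb) hab
  · unfold F2
    norm_num
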